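/- Let $A\in\mathbb{R}^{n\times m}$ have $\operatorname{rank}(A)=n-1$ or $n$, and $B\in\mathbb{R}^{n\times m}$ have $\operatorname{rank}(B)\le 1$. The $2n\times 2n$ matrix $\begin{pmatrix}\bar A & 0 & \bar B & 0\\ 0 & \bar A & 0 & \bar B\end{pmatrix}$, where $\bar A$ consists of selected columns of $A$ and $\bar B$ of selected columns of $B$ with total selected count $n$ per copy, is invertible if and only if either (i) $\bar B$ is empty and $\bar A$ is an invertible $n\times n$ submatrix of $A$, or (ii) $\bar B$ is a single column $b$, $\bar A$ has $n-1$ columns, and $\operatorname{rank}(\bar A\mid b)=n$. -/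

import Mathlib

/-!
Permuting columns turns the block matrix into `diag(C, C)` with `C = (Ā | B̄)`, so its rank is
`2 · rank C`; the two cases then only compare `rank C` with `n` (for `b = 0`, `C = Ā`).
-/

open Matrix

theorem Submodule.finrank_prod {K M N : Type*} [DivisionRing K] [AddCommGroup M] [Module K M]
    [AddCommGroup N] [Module K N] [FiniteDimensional K M] [FiniteDimensional K N]
    (S : Submodule K M) (T : Submodule K N) :
    Module.finrank K (S.prod T) = Module.finrank K S + Module.finrank K T := by
  have hinj : Function.Injective (S.subtype.prodMap T.subtype) :=
    S.injective_subtype.prodMap T.injective_subtype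
  rw [← Module.finrank_prod, (LinearEquiv.ofInjective _ hinj).finrank_eq,
    LinearMap.range_prodMap, Submodule.range_subtype, Submodule.range_subtype]

namespace Matrix

variable {K : Type*} [Field K] {m₁ m₂ n₁ n₂ : Type*} [Fintype m₁] [Fintype m₂]
  [Fintype n₁] [Fintype n₂]

theorem toMatrix_prodMap_mulVecLin [DecidableEq n₁] [DecidableEq n₂]
    (X : Matrix m₁ n₁ K) (Y : Matrix m₂ n₂ K) :
    LinearMap.toMatrix ((Pi.basisFun K n₁).prod (Pi.basisFun K n₂))
        ((Pi.basisFun K m₁).prod (Pi.basisFun K m₂)) (X.mulVecLin.prodMap Y.mulVecLin) =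
      fromBlocks X 0 0 Y := by
  ext (i | i) (j | j) <;> simp [LinearMap.toMatrix]

theorem rank_fromBlocks_zero_zero (X : Matrix m₁ n₁ K) (Y : Matrix m₂ n₂ K) :
    (fromBlocks X 0 0 Y).rank = X.rank + Y.rank := by
  classical
  rw [rank_eq_finrank_range_toLin _ ((Pi.basisFun K m₁).prod (Pi.basisFun K m₂))
      ((Pi.basisFun K n₁).prod (Pi.basisFun K n₂)), ← toMatrix_prodMap_mulVecLin,
    toLin_toMatrix, LinearMap.range_prodMap, Submodule.finrank_prod]
  rfl

theorem fromBlocks_fromCols_eq_submatrix {α m n p : Type*} [Zero α]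
    (X : Matrix m n α) (Y : Matrix m p α) :
    fromBlocks (fromCols X 0) (fromCols Y 0) (fromCols 0 X) (fromCols 0 Y) =
      (fromBlocks (fromCols X Y) 0 0 (fromCols X Y)).submatrix id
        (Equiv.sumSumSumComm n n p p) := by
  ext (i | i) ((j | j) | (j | j)) <;> rfl

theorem rank_fromBlocks_fromCols {m n p : Type*} [Fintype m] [Fintype n] [Fintype p]
    (X : Matrix m n K) (Y : Matrix m p K) :
    (fromBlocks (fromCols X 0) (fromCols Y 0) (fromCols 0 X) (fromCols 0 Y)).rank =
      2 * (fromCols X Y).rank := by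
  rw [fromBlocks_fromCols_eq_submatrix, two_mul, ← rank_fromBlocks_zero_zero]
  exact (fromBlocks (fromCols X Y) 0 0 (fromCols X Y)).rank_submatrix (Equiv.refl _) _

theorem fromCols_of_isEmpty {α m n p : Type*} [IsEmpty p] (X : Matrix m n α) (Y : Matrix m p α) :
    fromCols X Y = X.submatrix id (Equiv.sumEmpty n p) := by
  ext i (j | j)
  · rfl
  · exact isEmptyElim j

theorem rank_fromCols_of_isEmpty {m n p : Type*} [Fintype m] [Fintype n] [Fintype p] [IsEmpty p]
    (X : Matrix m n K) (Y : Matrix m p K) : (fromCols X Y).rank = X.rank := by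
  rw [fromCols_of_isEmpty]
  exact X.rank_submatrix (Equiv.refl _) _

end Matrix

theorem block_submatrix_invertible_iff_general (n m a b : ℕ)
    (hab : a + b = n) (hb : b ≤ 1)
    (A B : Matrix (Fin n) (Fin m) ℝ)
    (sA : Fin a → Fin m)
    (sB : Fin b → Fin m) :
    (Matrix.fromBlocks
        (Matrix.fromCols (A.submatrix id sA) 0) (Matrix.fromCols (B.submatrix id sB) 0)
        (Matrix.fromCols 0 (A.submatrix id sA)) (Matrix.fromCols 0 (B.submatrix id sB))
      ).rank = 2 * n
    ↔ ((b = 0 ∧ (A.submatrix id sA).rank = n) ∨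
       (b = 1 ∧ a = n - 1 ∧
        (Matrix.fromCols (A.submatrix id sA) (B.submatrix id sB)).rank = n)) := by
  rw [rank_fromBlocks_fromCols]
  obtain rfl | rfl := Nat.le_one_iff_eq_zero_or_eq_one.mp hb
  · rw [rank_fromCols_of_isEmpty]
    omega
  · omega

/-- Let `A ∈ ℝ^{n×m}` have rank `n-1` or `n`, and `B ∈ ℝ^{n×m}` have rank at most `1`.
For column selections `Ā` (of `a` columns of `A`) and `B̄` (of `b` columns of `B`) with
`a + b = n` and `b ≤ 1`, the `2n×2n` matrix `[[Ā, 0, B̄, 0], [0, Ā, 0, B̄]]` is invertible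
(has full rank `2n`) if and only if either (i) `b = 0` and `Ā` is an invertible (full-rank)
`n×n` submatrix of `A`, or (ii) `b = 1`, `Ā` has `n-1` columns, and `rank (Ā | B̄) = n`. -/
theorem block_submatrix_invertible_iff (n m a b : ℕ)
    (hab : a + b = n) (hb : b ≤ 1)
    (A B : Matrix (Fin n) (Fin m) ℝ)
    (hA : A.rank = n - 1 ∨ A.rank = n) (hB : B.rank ≤ 1)
    (sA : Fin a → Fin m) (hsA : Function.Injective sA)
    (sB : Fin b → Fin m) (hsB : Function.Injective sB) :
    (Matrix.fromBlocks
        (Matrix.fromCols (A.submatrix id sA) 0) (Matrix.fromCols (B.submatrix id sB) 0)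
        (Matrix.fromCols 0 (A.submatrix id sA)) (Matrix.fromCols 0 (B.submatrix id sB))
      ).rank = 2 * n
    ↔ ((b = 0 ∧ (A.submatrix id sA).rank = n) ∨
       (b = 1 ∧ a = n - 1 ∧
        (Matrix.fromCols (A.submatrix id sA) (B.submatrix id sB)).rank = n)) :=
  block_submatrix_invertible_iff_general n m a b hab hb A B sA sB
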